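/- Let U := {(x,y,z) ∈ ℝ³ : x ≠ 0}, φ := ½(x²+y²), ψ := z/x, and Z0' := xy ∂/∂x − x² ∂/∂y + yz ∂/∂z (a rescaling of ∇φ × ∇ψ on U), so that ∇_{Z0'}Z0'(φ) = −x²(x²+y²) ≠ 0 on U. Let g be any constant real symmetric invertible 3×3 matrix, and set Z1 := g⁻¹∇φ, Z2 := g⁻¹∇ψ, X := (∇_{Z0'}Z0'(ψ))·Z1 − (∇_{Z0'}Z0'(φ))·Z2, A := ½ g(Z0',Z0')/∇_{Z0'}Z0'(φ), u := (g₁₁g₂₂−g₁₂²)x² + 2(g₁₃g₂₂−g₁₂g₂₃)xz + (g₂₂g₃₃−g₂₃²)z², and v := g₁₂x + g₂₂y + g₂₃z. Then X(u) = 0 and X(v) = 0 on U, and the function V := u + v² satisfies X(V) = 0 and A·Z0'(Z1(V)) = Z0'(V) − Z0'(A)·Z1(V) on U. -/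

import Mathlib

noncomputable section

/-- Partial derivative `∂f/∂xⁱ` at `p`. -/
def pd (i : Fin 3) (f : (Fin 3 → ℝ) → ℝ) (p : Fin 3 → ℝ) : ℝ :=
  fderiv ℝ f p (Pi.single i 1)

/-- Gradient of a scalar function. -/
def grad (f : (Fin 3 → ℝ) → ℝ) (p : Fin 3 → ℝ) : Fin 3 → ℝ :=
  fun i => pd i f p

/-- Directional derivative `Σᵢ vⁱ ∂f/∂xⁱ` of `f` along the vector `v` at `p`. -/
def dd (v : Fin 3 → ℝ) (f : (Fin 3 → ℝ) → ℝ) (p : Fin 3 → ℝ) : ℝ :=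
  ∑ i, v i * pd i f p

/-- `(∇_W W)ⁱ = Σⱼ Wʲ ∂Wⁱ/∂xʲ`. -/
def nab (W : (Fin 3 → ℝ) → (Fin 3 → ℝ)) (p : Fin 3 → ℝ) : Fin 3 → ℝ :=
  fun i => ∑ j, W p j * pd j (fun q => W q i) p

/-- Euclidean cross product on `ℝ³`. -/
def cross (a b : Fin 3 → ℝ) : Fin 3 → ℝ :=
  ![a 1 * b 2 - a 2 * b 1, a 2 * b 0 - a 0 * b 2, a 0 * b 1 - a 1 * b 0]

/-- `g(v,w) = Σᵢⱼ gᵢⱼ vⁱ wʲ`. -/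
def gB (g : Matrix (Fin 3) (Fin 3) ℝ) (v w : Fin 3 → ℝ) : ℝ :=
  ∑ i, ∑ j, g i j * v i * w j

/-- Lie bracket of vector fields: `[V,W]ⁱ = Σⱼ (Vʲ ∂Wⁱ/∂xʲ − Wʲ ∂Vⁱ/∂xʲ)`. -/
def lieB (V W : (Fin 3 → ℝ) → (Fin 3 → ℝ)) (p : Fin 3 → ℝ) : Fin 3 → ℝ :=
  fun i => ∑ j, (V p j * pd j (fun q => W q i) p - W p j * pd j (fun q => V q i) p)

/-- curl of a vector field on `ℝ³`. -/
def curl (a : (Fin 3 → ℝ) → (Fin 3 → ℝ)) (p : Fin 3 → ℝ) : Fin 3 → ℝ :=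
  ![pd 1 (fun q => a q 2) p - pd 2 (fun q => a q 1) p,
    pd 2 (fun q => a q 0) p - pd 0 (fun q => a q 2) p,
    pd 0 (fun q => a q 1) p - pd 1 (fun q => a q 0) p]

/-- divergence of a vector field. -/
def divg (W : (Fin 3 → ℝ) → (Fin 3 → ℝ)) (p : Fin 3 → ℝ) : ℝ :=
  ∑ i, pd i (fun q => W q i) p

/-- Euclidean inner product on `ℝ³`. -/
def ip (a b : Fin 3 → ℝ) : ℝ := ∑ i, a i * b i

set_option linter.unusedVariables false

/-!
Write `D := x²(x²+y²)` and call `w` the `g`-gradient of `f` at `p` when `df(a) = g(a,w)` for all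
`a`, i.e. `w = g⁻¹∇f`. A direct computation gives `∇_{Z0'}Z0' = y Z0' − x² p`. As `Z0'` is
tangent to the level sets of `φ` and `ψ`, Euler's relations for the homogeneous `φ` (degree 2)
and `ψ` (degree 0) give `∇_{Z0'}Z0'(φ) = −D` and `∇_{Z0'}Z0'(ψ) = 0`. Hence `X = D g⁻¹∇ψ`, and
`X(f) = D w(ψ)` for the `g`-gradient `w` of `f`.

The key identity is `u + v² = g₁₁ g(p,p)`: `v = g(e_y,p)` and `u` is the Gram determinant
`g(e_y,e_y) g(p,p) − g(e_y,p)²`. So the `g`-gradients of `V`, `v`, `u` are `2g₁₁p`, `e_y` and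
`2g₁₁p − 2v e_y`, and these all annihilate `ψ`: `p(ψ) = 0` by homogeneity and `∂_yψ = 0`.

In the energy-free equation, `Z1(V) = p(φ)·2g₁₁ = 4g₁₁φ` is killed by `Z0'`, and the right-hand
side vanishes because `Z0'(V) = 2g₁₁ g(Z0',p)` while `Z0'(A)·(x²+y²) = g(Z0',p)`; the latter
follows from `Z0'(g(Z0',Z0')) = 2g(∇_{Z0'}Z0', Z0')`, `Z0'(D) = 2yD` and the formula for
`∇_{Z0'}Z0'`.
-/

open Matrix

section Derivation

variable {f h : (Fin 3 → ℝ) → ℝ} {p w : Fin 3 → ℝ}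

theorem dd_eq_fderiv : dd w f p = fderiv ℝ f p w := by
  conv_rhs => rw [pi_eq_sum_univ' w]
  simp [dd, pd, map_sum]

theorem dd_eq_dotProduct_grad : dd w f p = w ⬝ᵥ grad f p := rfl

theorem dd_smul (a : ℝ) (w : Fin 3 → ℝ) : dd (a • w) f p = a * dd w f p := by
  simp only [dd_eq_dotProduct_grad, smul_dotProduct, smul_eq_mul]

theorem dd_smul_sub_smul (a b : ℝ) (w w' : Fin 3 → ℝ) :
    dd (a • w - b • w') f p = a * dd w f p - b * dd w' f p := by
  simp only [dd_eq_dotProduct_grad, sub_dotProduct, smul_dotProduct, smul_eq_mul]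

theorem dd_coord (j : Fin 3) : dd w (fun q => q j) p = w j := by
  have hproj : (fun q : Fin 3 → ℝ => q j) = ContinuousLinearMap.proj (R := ℝ) j := rfl
  rw [dd_eq_fderiv, hproj, ContinuousLinearMap.fderiv]
  rfl

theorem dd_const (c : ℝ) : dd w (fun _ => c) p = 0 := by simp [dd_eq_fderiv]

theorem dd_add (hf : DifferentiableAt ℝ f p) (hh : DifferentiableAt ℝ h p) :
    dd w (fun q => f q + h q) p = dd w f p + dd w h p := by
  simp [dd_eq_fderiv, fderiv_fun_add hf hh]

theorem dd_sub (hf : DifferentiableAt ℝ f p) (hh : DifferentiableAt ℝ h p) :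
    dd w (fun q => f q - h q) p = dd w f p - dd w h p := by
  simp [dd_eq_fderiv, fderiv_fun_sub hf hh]

theorem dd_neg : dd w (fun q => -f q) p = -dd w f p := by
  simp [dd_eq_fderiv, fderiv_fun_neg]

theorem dd_mul (hf : DifferentiableAt ℝ f p) (hh : DifferentiableAt ℝ h p) :
    dd w (fun q => f q * h q) p = f p * dd w h p + h p * dd w f p := by
  simp [dd_eq_fderiv, fderiv_fun_mul hf hh]

theorem dd_const_mul (c : ℝ) (hf : DifferentiableAt ℝ f p) :
    dd w (fun q => c * f q) p = c * dd w f p := by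
  rw [dd_mul (differentiableAt_const c) hf, dd_const]
  ring

theorem dd_pow (hf : DifferentiableAt ℝ f p) (n : ℕ) :
    dd w (fun q => f q ^ n) p = n * f p ^ (n - 1) * dd w f p := by
  simp [dd_eq_fderiv, fderiv_fun_pow n hf]

theorem dd_inv (hh : DifferentiableAt ℝ h p) (hh0 : h p ≠ 0) :
    dd w (fun q => (h q)⁻¹) p = -dd w h p / h p ^ 2 := by
  have H : HasFDerivAt (fun q => (h q)⁻¹) (-(h p ^ 2)⁻¹ • fderiv ℝ h p) p :=
    (hasDerivAt_inv hh0).comp_hasFDerivAt p hh.hasFDerivAt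
  rw [dd_eq_fderiv, dd_eq_fderiv, H.fderiv]
  simp [div_eq_inv_mul]

theorem dd_div (hf : DifferentiableAt ℝ f p) (hh : DifferentiableAt ℝ h p) (hh0 : h p ≠ 0) :
    dd w (fun q => f q / h q) p = (dd w f p * h p - f p * dd w h p) / h p ^ 2 := by
  simp only [div_eq_mul_inv]
  rw [dd_mul (h := fun q => (h q)⁻¹) hf (hh.inv hh0), dd_inv hh hh0]
  field_simp
  ring

end Derivation

theorem inv_mulVec_dotProduct_mulVec {n R : Type*} [Fintype n] [DecidableEq n] [CommRing R]
    {g : Matrix n n R} (hsym : g.IsSymm) (hinv : IsUnit g.det) (a b : n → R) :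
    g⁻¹ *ᵥ a ⬝ᵥ g *ᵥ b = a ⬝ᵥ b := by
  rw [dotProduct_mulVec, ← mulVec_transpose, hsym.eq, mulVec_mulVec, mul_nonsing_inv g hinv,
    one_mulVec]

section ConstantMetric

variable {g : Matrix (Fin 3) (Fin 3) ℝ} {f h : (Fin 3 → ℝ) → ℝ} {p w : Fin 3 → ℝ}

theorem gB_eq_dotProduct (g : Matrix (Fin 3) (Fin 3) ℝ) (a b : Fin 3 → ℝ) :
    gB g a b = a ⬝ᵥ g *ᵥ b := by
  simp [gB, dotProduct, mulVec, Finset.mul_sum, mul_assoc, mul_left_comm]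

theorem gB_comm (hsym : g.IsSymm) (a b : Fin 3 → ℝ) : gB g a b = gB g b a := by
  rw [gB_eq_dotProduct, gB_eq_dotProduct, dotProduct_mulVec, ← mulVec_transpose, hsym.eq,
    dotProduct_comm]

theorem gB_smul_right (c : ℝ) (a b : Fin 3 → ℝ) : gB g a (c • b) = c * gB g a b := by
  rw [gB_eq_dotProduct, gB_eq_dotProduct, mulVec_smul, dotProduct_smul, smul_eq_mul]

theorem gB_smul_sub_smul_left (a b : ℝ) (x y z : Fin 3 → ℝ) :
    gB g (a • x - b • y) z = a * gB g x z - b * gB g y z := by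
  simp only [gB_eq_dotProduct, sub_dotProduct, smul_dotProduct, smul_eq_mul]

theorem differentiableAt_gB_self (g : Matrix (Fin 3) (Fin 3) ℝ) {W : (Fin 3 → ℝ) → Fin 3 → ℝ}
    (hW : ∀ i, DifferentiableAt ℝ (fun q => W q i) p) :
    DifferentiableAt ℝ (fun q => gB g (W q) (W q)) p := by
  unfold gB
  fun_prop

theorem dd_gB_self (hsym : g.IsSymm) {W : (Fin 3 → ℝ) → Fin 3 → ℝ}
    (hW : ∀ i, DifferentiableAt ℝ (fun q => W q i) p) :
    dd (W p) (fun q => gB g (W q) (W q)) p = 2 * gB g (nab W p) (W p) := by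
  have hnab : nab W p = fun i => dd (W p) (fun q => W q i) p := rfl
  simp (disch := fun_prop) only [gB, Fin.sum_univ_three, dd_add, dd_mul, dd_const, hnab]
  rw [hsym.apply 0 1, hsym.apply 0 2, hsym.apply 1 2]
  ring

def HasMetricGrad (g : Matrix (Fin 3) (Fin 3) ℝ) (f : (Fin 3 → ℝ) → ℝ) (p w : Fin 3 → ℝ) :
    Prop :=
  ∀ a, dd a f p = gB g a w

theorem HasMetricGrad.dd_inv_mulVec_grad (hsym : g.IsSymm) (hinv : IsUnit g.det)
    (hf : HasMetricGrad g f p w) : dd (g⁻¹ *ᵥ grad h p) f p = dd w h p := by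
  rw [hf, gB_eq_dotProduct, inv_mulVec_dotProduct_mulVec hsym hinv, dotProduct_comm,
    dd_eq_dotProduct_grad]

theorem hasMetricGrad_const_mul_quadForm (hsym : g.IsSymm) (c : ℝ) :
    HasMetricGrad g (fun q => c * (q ⬝ᵥ g *ᵥ q)) p ((2 * c) • p) := by
  intro a
  simp only [dotProduct, mulVec, Fin.sum_univ_three]
  simp (disch := fun_prop) only [dd_const_mul, dd_add, dd_mul, dd_coord]
  simp only [gB, Fin.sum_univ_three, Pi.smul_apply, smul_eq_mul]
  rw [hsym.apply 0 1, hsym.apply 0 2, hsym.apply 1 2]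
  ring

end ConstantMetric

namespace Example5

def phi : (Fin 3 → ℝ) → ℝ := fun p => 1/2 * (p 0 ^ 2 + p 1 ^ 2)

def psi : (Fin 3 → ℝ) → ℝ := fun p => p 2 / p 0

def Z0 : (Fin 3 → ℝ) → Fin 3 → ℝ := fun p => ![p 0 * p 1, -(p 0 ^ 2), p 1 * p 2]

variable {p : Fin 3 → ℝ}

theorem differentiableAt_phi : DifferentiableAt ℝ phi p := by
  unfold phi
  fun_prop

theorem differentiableAt_Z0 (i : Fin 3) : DifferentiableAt ℝ (fun q => Z0 q i) p := by
  fin_cases i <;>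
    simp only [Z0, Fin.zero_eta, Fin.mk_one, Fin.reduceFinMk, cons_val] <;> fun_prop

theorem dd_phi (w : Fin 3 → ℝ) : dd w phi p = p 0 * w 0 + p 1 * w 1 := by
  unfold phi
  simp (disch := fun_prop) only [dd_const_mul, dd_add, dd_pow, dd_coord]
  norm_num
  ring

theorem dd_psi (hp : p 0 ≠ 0) (w : Fin 3 → ℝ) :
    dd w psi p = (w 2 * p 0 - p 2 * w 0) / p 0 ^ 2 := by
  unfold psi
  rw [dd_div (by fun_prop) (by fun_prop) hp, dd_coord, dd_coord]

theorem dd_Z0_phi : dd (Z0 p) phi p = 0 := by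
  simp only [dd_phi, Z0, cons_val]
  ring

theorem dd_Z0_psi (hp : p 0 ≠ 0) : dd (Z0 p) psi p = 0 := by
  simp only [dd_psi hp, Z0, cons_val]
  field_simp
  ring

theorem dd_self_phi : dd p phi p = p 0 ^ 2 + p 1 ^ 2 := by
  rw [dd_phi]
  ring

theorem dd_self_psi (hp : p 0 ≠ 0) : dd p psi p = 0 := by
  rw [dd_psi hp]
  ring

theorem dd_single_one_psi (hp : p 0 ≠ 0) : dd (Pi.single 1 1) psi p = 0 := by
  simp [dd_psi hp]

theorem nab_Z0 : nab Z0 p = p 1 • Z0 p - p 0 ^ 2 • p := by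
  have hnab : nab Z0 p = fun i => dd (Z0 p) (fun q => Z0 q i) p := rfl
  ext i
  fin_cases i <;>
    simp (disch := fun_prop) only [hnab, Z0, Fin.zero_eta, Fin.mk_one, Fin.reduceFinMk, cons_val,
      dd_mul, dd_neg, dd_pow, dd_coord, Pi.sub_apply, Pi.smul_apply, smul_eq_mul] <;>
    ring

theorem dd_nab_Z0_phi : dd (nab Z0 p) phi p = -(p 0 ^ 2) * (p 0 ^ 2 + p 1 ^ 2) := by
  rw [nab_Z0, dd_smul_sub_smul, dd_Z0_phi, dd_self_phi]
  ring

theorem dd_nab_Z0_phi_ne_zero (hp : p 0 ≠ 0) : dd (nab Z0 p) phi p ≠ 0 := by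
  have hpos : 0 < p 0 ^ 2 * (p 0 ^ 2 + p 1 ^ 2) := by positivity
  rw [dd_nab_Z0_phi]
  linarith

theorem dd_nab_Z0_psi (hp : p 0 ≠ 0) : dd (nab Z0 p) psi p = 0 := by
  rw [nab_Z0, dd_smul_sub_smul, dd_Z0_psi hp, dd_self_psi hp]
  ring

theorem differentiableAt_dd_nab_Z0_phi :
    DifferentiableAt ℝ (fun q => dd (nab Z0 q) phi q) p := by
  simp only [dd_nab_Z0_phi]
  fun_prop

theorem dd_Z0_dd_nab_Z0_phi :
    dd (Z0 p) (fun q => dd (nab Z0 q) phi q) p = 2 * p 1 * dd (nab Z0 p) phi p := by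
  simp (disch := fun_prop) only [dd_nab_Z0_phi, dd_mul, dd_neg, dd_add, dd_pow, dd_coord, Z0,
    cons_val]
  ring

variable {g : Matrix (Fin 3) (Fin 3) ℝ}

def Z1 (g : Matrix (Fin 3) (Fin 3) ℝ) (p : Fin 3 → ℝ) : Fin 3 → ℝ := g⁻¹ *ᵥ grad phi p

def Z2 (g : Matrix (Fin 3) (Fin 3) ℝ) (p : Fin 3 → ℝ) : Fin 3 → ℝ := g⁻¹ *ᵥ grad psi p

def X (g : Matrix (Fin 3) (Fin 3) ℝ) (p : Fin 3 → ℝ) : Fin 3 → ℝ :=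
  dd (nab Z0 p) psi p • Z1 g p - dd (nab Z0 p) phi p • Z2 g p

def A (g : Matrix (Fin 3) (Fin 3) ℝ) (p : Fin 3 → ℝ) : ℝ :=
  1/2 * gB g (Z0 p) (Z0 p) / dd (nab Z0 p) phi p

theorem dd_X_of_hasMetricGrad (hsym : g.IsSymm) (hinv : IsUnit g.det) (hp : p 0 ≠ 0)
    {f : (Fin 3 → ℝ) → ℝ} {w : Fin 3 → ℝ} (hf : HasMetricGrad g f p w) :
    dd (X g p) f p = p 0 ^ 2 * (p 0 ^ 2 + p 1 ^ 2) * dd w psi p := by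
  rw [X, dd_nab_Z0_psi hp, dd_nab_Z0_phi, zero_smul, zero_sub, ← neg_smul, dd_smul, Z2,
    hf.dd_inv_mulVec_grad hsym hinv]
  ring

theorem dd_Z1_of_hasMetricGrad (hsym : g.IsSymm) (hinv : IsUnit g.det) {f : (Fin 3 → ℝ) → ℝ}
    {c : ℝ} (hf : HasMetricGrad g f p (c • p)) : dd (Z1 g p) f p = 2 * c * phi p := by
  rw [Z1, hf.dd_inv_mulVec_grad hsym hinv, dd_smul, dd_self_phi, phi]
  ring

theorem dd_Z0_A_mul (hsym : g.IsSymm) (hp : p 0 ≠ 0) :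
    dd (Z0 p) (A g) p * (p 0 ^ 2 + p 1 ^ 2) = gB g (Z0 p) p := by
  have hG := differentiableAt_gB_self g (p := p) differentiableAt_Z0
  unfold A
  rw [dd_div (hG.const_mul _) differentiableAt_dd_nab_Z0_phi (dd_nab_Z0_phi_ne_zero hp),
    dd_const_mul _ hG, dd_gB_self hsym differentiableAt_Z0, dd_Z0_dd_nab_Z0_phi, dd_nab_Z0_phi,
    nab_Z0, gB_smul_sub_smul_left, gB_comm hsym p]
  have hpos : 0 < p 0 ^ 2 * (p 0 ^ 2 + p 1 ^ 2) := by positivity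
  field_simp
  ring

def u (g : Matrix (Fin 3) (Fin 3) ℝ) : (Fin 3 → ℝ) → ℝ := fun p =>
  (g 0 0 * g 1 1 - g 0 1 ^ 2) * p 0 ^ 2 + 2 * (g 0 2 * g 1 1 - g 0 1 * g 1 2) * p 0 * p 2
    + (g 1 1 * g 2 2 - g 1 2 ^ 2) * p 2 ^ 2

def v (g : Matrix (Fin 3) (Fin 3) ℝ) : (Fin 3 → ℝ) → ℝ := fun p =>
  g 0 1 * p 0 + g 1 1 * p 1 + g 1 2 * p 2

theorem u_add_v_sq (hsym : g.IsSymm) (q : Fin 3 → ℝ) :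
    u g q + v g q ^ 2 = g 1 1 * (q ⬝ᵥ g *ᵥ q) := by
  simp only [u, v, dotProduct, mulVec, Fin.sum_univ_three]
  rw [hsym.apply 0 1, hsym.apply 0 2, hsym.apply 1 2]
  ring

theorem differentiableAt_v : DifferentiableAt ℝ (v g) p := by
  unfold v
  fun_prop

theorem hasMetricGrad_v (hsym : g.IsSymm) : HasMetricGrad g (v g) p (Pi.single 1 1) := by
  intro a
  unfold v
  simp (disch := fun_prop) [dd_add, dd_const_mul, dd_coord, gB, Fin.sum_univ_three,
    Pi.single_apply, hsym.apply 1 2]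

theorem hasMetricGrad_u (hsym : g.IsSymm) :
    HasMetricGrad g (u g) p ((2 * g 1 1) • p - (2 * v g p) • Pi.single 1 1) := by
  have hu : u g = fun q => g 1 1 * (q ⬝ᵥ g *ᵥ q) - v g q ^ 2 := by
    funext q
    rw [← u_add_v_sq hsym]
    ring
  have hQ : DifferentiableAt ℝ (fun q => g 1 1 * (q ⬝ᵥ g *ᵥ q)) p := by
    simp only [dotProduct, mulVec, Fin.sum_univ_three]
    fun_prop
  intro a
  rw [hu, dd_sub (h := fun q => v g q ^ 2) hQ (differentiableAt_v.pow 2),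
    dd_pow differentiableAt_v, hasMetricGrad_const_mul_quadForm hsym, hasMetricGrad_v hsym]
  simp only [gB_eq_dotProduct, mulVec_sub, mulVec_smul, dotProduct_sub, dotProduct_smul,
    smul_eq_mul]
  ring

end Example5

/-- Example 5, general constant metric: for `φ = ½(x²+y²)`, `ψ = z/x`
on `{x ≠ 0}` and any constant symmetric invertible `g`: `X(u) = X(v) = 0`, and
`V = u + v²` satisfies `X(V) = 0` and the energy-free equation
`A·Z0'(Z1(V)) = Z0'(V) − Z0'(A)·Z1(V)`. -/
theorem example5_general_metric
    (g : Matrix (Fin 3) (Fin 3) ℝ) (hsym : g.IsSymm) (hinv : IsUnit g.det)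
    (U : Set (Fin 3 → ℝ)) (hU : U = {p | p 0 ≠ 0})
    (φ ψ : (Fin 3 → ℝ) → ℝ)
    (hφ : φ = fun p => 1/2 * (p 0 ^ 2 + p 1 ^ 2)) (hψ : ψ = fun p => p 2 / p 0)
    (Z0' : (Fin 3 → ℝ) → (Fin 3 → ℝ))
    (hZ0' : Z0' = fun p => ![p 0 * p 1, -(p 0 ^ 2), p 1 * p 2])
    (Z1 Z2 : (Fin 3 → ℝ) → (Fin 3 → ℝ))
    (hZ1 : Z1 = fun p => g⁻¹.mulVec (grad φ p))
    (hZ2 : Z2 = fun p => g⁻¹.mulVec (grad ψ p))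
    (X : (Fin 3 → ℝ) → (Fin 3 → ℝ))
    (hX : X = fun p => dd (nab Z0' p) ψ p • Z1 p - dd (nab Z0' p) φ p • Z2 p)
    (A : (Fin 3 → ℝ) → ℝ)
    (hA : A = fun p => 1/2 * gB g (Z0' p) (Z0' p) / dd (nab Z0' p) φ p)
    (u v : (Fin 3 → ℝ) → ℝ)
    (hu : u = fun p => (g 0 0 * g 1 1 - g 0 1 ^ 2) * p 0 ^ 2
                        + 2 * (g 0 2 * g 1 1 - g 0 1 * g 1 2) * p 0 * p 2
                        + (g 1 1 * g 2 2 - g 1 2 ^ 2) * p 2 ^ 2)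
    (hv : v = fun p => g 0 1 * p 0 + g 1 1 * p 1 + g 1 2 * p 2)
    (V : (Fin 3 → ℝ) → ℝ) (hV : V = fun p => u p + v p ^ 2) :
    ∀ p ∈ U,
      dd (nab Z0' p) φ p = -(p 0 ^ 2) * (p 0 ^ 2 + p 1 ^ 2) ∧
      dd (nab Z0' p) φ p ≠ 0 ∧
      dd (X p) u p = 0 ∧ dd (X p) v p = 0 ∧ dd (X p) V p = 0 ∧
      A p * dd (Z0' p) (fun q => dd (Z1 q) V q) p
          = dd (Z0' p) V p - dd (Z0' p) A p * dd (Z1 p) V p := by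
  open Example5 in
  subst hU
  obtain rfl : φ = phi := hφ
  obtain rfl : ψ = psi := hψ
  obtain rfl : Z0' = Z0 := hZ0'
  obtain rfl : Z1 = Example5.Z1 g := hZ1
  obtain rfl : Z2 = Example5.Z2 g := hZ2
  obtain rfl : X = Example5.X g := hX
  obtain rfl : A = Example5.A g := hA
  obtain rfl : u = Example5.u g := hu
  obtain rfl : v = Example5.v g := hv
  replace hV : V = fun q => g 1 1 * (q ⬝ᵥ g *ᵥ q) := hV.trans (funext (u_add_v_sq hsym))
  have hgradV (q : Fin 3 → ℝ) : HasMetricGrad g V q ((2 * g 1 1) • q) :=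
    hV ▸ hasMetricGrad_const_mul_quadForm hsym _
  intro p (hp : p 0 ≠ 0)
  refine ⟨dd_nab_Z0_phi, dd_nab_Z0_phi_ne_zero hp, ?_, ?_, ?_, ?_⟩
  · rw [dd_X_of_hasMetricGrad hsym hinv hp (hasMetricGrad_u hsym), dd_smul_sub_smul,
      dd_self_psi hp, dd_single_one_psi hp]
    ring
  · rw [dd_X_of_hasMetricGrad hsym hinv hp (hasMetricGrad_v hsym), dd_single_one_psi hp,
      mul_zero]
  · rw [dd_X_of_hasMetricGrad hsym hinv hp (hgradV p), dd_smul, dd_self_psi hp]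
    ring
  · simp only [dd_Z1_of_hasMetricGrad hsym hinv (hgradV _), dd_const_mul _ differentiableAt_phi,
      dd_Z0_phi, hgradV p (Z0 p), gB_smul_right]
    rw [← dd_Z0_A_mul hsym hp]
    unfold phi
    ring
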